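/- arXiv:2008.13708 — 5 statements merged into one kernel-verified Lean document; each statement's English description precedes it below -/
import Mathlib

section
/- For a bounded linear operator T on a complex Hilbert space H and α ∈ (0,1], the quantity ‖T‖_α = sup{ √(α|⟨Tx,x⟩|² + (1−α)‖Tx‖²) : x ∈ H, ‖x‖=1 } satisfies w(T) ≤ ‖T‖_α ≤ √(4−3α)·w(T), where w(T) = sup{|⟨Tx,x⟩| : ‖x‖=1} is the numerical radius of T. -/
open scoped Matrix

/-- The `α`-norm of a bounded operator `T`:
`‖T‖_α = sup {√(α|⟨Tx,x⟩|² + (1-α)‖Tx‖²) : ‖x‖ = 1}`. -/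
noncomputable def alphaNorm {H : Type*} [NormedAddCommGroup H] [InnerProductSpace ℂ H]
    (α : ℝ) (T : H →L[ℂ] H) : ℝ :=
  sSup {r : ℝ | ∃ x : H, ‖x‖ = 1 ∧
    r = Real.sqrt (α * ‖(inner ℂ (T x) x : ℂ)‖ ^ 2 + (1 - α) * ‖T x‖ ^ 2)}

/-- The numerical radius `w(T) = sup {|⟨Tx,x⟩| : ‖x‖ = 1}`. -/
noncomputable def numRadius {H : Type*} [NormedAddCommGroup H] [InnerProductSpace ℂ H]
    (T : H →L[ℂ] H) : ℝ :=
  sSup {r : ℝ | ∃ x : H, ‖x‖ = 1 ∧ r = ‖(inner ℂ (T x) x : ℂ)‖}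

/-!
Polarization writes `⟪T x, y⟫` through four values of the quadratic form `z ↦ ⟪T z, z⟫`, and
the parallelogram law turns this into `‖⟪T x, y⟫‖ ≤ w(T) (‖x‖² + ‖y‖²)`, whence `‖T‖ ≤ 2 w(T)`.
For a unit vector `x`, `‖⟪T x, x⟫‖ ≤ ‖T x‖ ≤ 2 w(T)`, so `α ‖⟪T x, x⟫‖² + (1 - α) ‖T x‖²` lies
between `‖⟪T x, x⟫‖²` and `(α + 4 (1 - α)) w(T)² = (4 - 3α) w(T)²`.
-/

open scoped InnerProductSpace

lemma Complex.norm_sub_sub_I_mul_add_I_mul_le (a b c d : ℂ) :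
    ‖a - b - I * c + I * d‖ ≤ ‖a‖ + ‖b‖ + ‖c‖ + ‖d‖ :=
  calc ‖a - b - I * c + I * d‖ ≤ ‖a - b‖ + ‖I * c‖ + ‖I * d‖ :=
        (norm_add_le _ _).trans (by gcongr; exact norm_sub_le _ _)
    _ ≤ ‖a‖ + ‖b‖ + ‖c‖ + ‖d‖ := by
        rw [norm_mul, norm_mul, norm_I, one_mul, one_mul]; gcongr; exact norm_sub_le _ _

section NumRadius

variable {H : Type*} [NormedAddCommGroup H] [InnerProductSpace ℂ H] (T : H →L[ℂ] H)

lemma numRadius_bddAbove :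
    BddAbove {r : ℝ | ∃ x : H, ‖x‖ = 1 ∧ r = ‖⟪T x, x⟫_ℂ‖} := by
  refine ⟨‖T‖, ?_⟩
  rintro r ⟨x, hx, rfl⟩
  calc ‖⟪T x, x⟫_ℂ‖ ≤ ‖T x‖ * ‖x‖ := norm_inner_le_norm _ _
    _ ≤ ‖T‖ * ‖x‖ * ‖x‖ := by gcongr; exact T.le_opNorm x
    _ = ‖T‖ := by rw [hx, mul_one, mul_one]

lemma numRadius_nonneg : 0 ≤ numRadius T :=
  Real.sSup_nonneg (by rintro r ⟨x, -, rfl⟩; positivity)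

lemma norm_inner_apply_self_le_numRadius {x : H} (hx : ‖x‖ = 1) :
    ‖⟪T x, x⟫_ℂ‖ ≤ numRadius T :=
  le_csSup (numRadius_bddAbove T) ⟨x, hx, rfl⟩

lemma norm_inner_apply_smul_self (c : ℂ) (x : H) :
    ‖⟪T (c • x), c • x⟫_ℂ‖ = ‖c‖ ^ 2 * ‖⟪T x, x⟫_ℂ‖ := by
  rw [map_smul, inner_smul_left, inner_smul_right, norm_mul, norm_mul, RCLike.norm_conj, sq,
    mul_assoc]

lemma norm_inner_apply_self_le_numRadius_mul_sq (x : H) :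
    ‖⟪T x, x⟫_ℂ‖ ≤ numRadius T * ‖x‖ ^ 2 := by
  rcases eq_or_ne x 0 with rfl | hx
  · simp
  have hx' : (‖x‖ : ℂ) ≠ 0 := by exact_mod_cast norm_ne_zero_iff.mpr hx
  set u : H := ((‖x‖⁻¹ : ℝ) : ℂ) • x
  have hxu : x = (‖x‖ : ℂ) • u := by
    rw [smul_smul, Complex.ofReal_inv, mul_inv_cancel₀ hx', one_smul]
  have hu : ‖u‖ = 1 := by
    rw [norm_smul, Complex.norm_real, norm_inv, norm_norm,
      inv_mul_cancel₀ (norm_ne_zero_iff.mpr hx)]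
  calc ‖⟪T x, x⟫_ℂ‖ = ‖x‖ ^ 2 * ‖⟪T u, u⟫_ℂ‖ := by
        conv_lhs => rw [hxu]
        rw [norm_inner_apply_smul_self, Complex.norm_real, norm_norm]
    _ ≤ ‖x‖ ^ 2 * numRadius T := by gcongr; exact norm_inner_apply_self_le_numRadius T hu
    _ = numRadius T * ‖x‖ ^ 2 := mul_comm _ _

lemma norm_inner_apply_le_numRadius_mul (x y : H) :
    ‖⟪T x, y⟫_ℂ‖ ≤ numRadius T * (‖x‖ ^ 2 + ‖y‖ ^ 2) := by
  have hIy : ‖Complex.I • y‖ = ‖y‖ := by rw [norm_smul, Complex.norm_I, one_mul]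
  have hpar := parallelogram_law_with_norm ℂ x y
  have hparI := parallelogram_law_with_norm ℂ x (Complex.I • y)
  rw [hIy] at hparI
  have b₁ := norm_inner_apply_self_le_numRadius_mul_sq T (x + y)
  have b₂ := norm_inner_apply_self_le_numRadius_mul_sq T (x - y)
  have b₃ := norm_inner_apply_self_le_numRadius_mul_sq T (x + Complex.I • y)
  have b₄ := norm_inner_apply_self_le_numRadius_mul_sq T (x - Complex.I • y)
  have hpol := inner_map_polarization' (T : H →ₗ[ℂ] H) x y
  simp only [ContinuousLinearMap.coe_coe] at hpol
  rw [hpol, norm_div, Complex.norm_ofNat]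
  calc _ ≤ (‖⟪T (x + y), x + y⟫_ℂ‖ + ‖⟪T (x - y), x - y⟫_ℂ‖
          + ‖⟪T (x + Complex.I • y), x + Complex.I • y⟫_ℂ‖
          + ‖⟪T (x - Complex.I • y), x - Complex.I • y⟫_ℂ‖) / 4 := by
        gcongr; exact Complex.norm_sub_sub_I_mul_add_I_mul_le _ _ _ _
    _ ≤ numRadius T * ((‖x + y‖ ^ 2 + ‖x - y‖ ^ 2)
          + (‖x + Complex.I • y‖ ^ 2 + ‖x - Complex.I • y‖ ^ 2)) / 4 := by linarith
    _ = numRadius T * (‖x‖ ^ 2 + ‖y‖ ^ 2) := by rw [hpar, hparI]; ring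

lemma norm_apply_le_two_mul_numRadius_mul (x : H) : ‖T x‖ ≤ 2 * numRadius T * ‖x‖ := by
  rcases eq_or_ne (T x) 0 with hTx | hTx
  · rw [hTx, norm_zero]; have := numRadius_nonneg T; positivity
  have hTx' : 0 < ‖T x‖ := norm_pos_iff.mpr hTx
  have hx : 0 < ‖x‖ := norm_pos_iff.mpr fun h ↦ hTx (by rw [h, map_zero])
  set y : H := ((‖x‖ / ‖T x‖ : ℝ) : ℂ) • T x
  have hy : ‖y‖ = ‖x‖ := by
    rw [norm_smul, Complex.norm_real, Real.norm_eq_abs, abs_div, abs_norm, abs_norm,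
      div_mul_cancel₀ _ hTx'.ne']
  have hTxy : ‖⟪T x, y⟫_ℂ‖ = ‖x‖ * ‖T x‖ := by
    rw [inner_smul_right, inner_self_eq_norm_sq_to_K, norm_mul, norm_pow, Complex.norm_real,
      RCLike.norm_ofReal, Real.norm_eq_abs, abs_div, abs_norm, abs_norm]
    field_simp
  have h := norm_inner_apply_le_numRadius_mul T x y
  rw [hTxy, hy] at h
  nlinarith

lemma opNorm_le_two_mul_numRadius : ‖T‖ ≤ 2 * numRadius T :=
  T.opNorm_le_bound (by have := numRadius_nonneg T; positivity)
    (norm_apply_le_two_mul_numRadius_mul T)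

end NumRadius

section AlphaNorm

variable {H : Type*} [NormedAddCommGroup H] [InnerProductSpace ℂ H] {α : ℝ} (T : H →L[ℂ] H)

lemma norm_inner_apply_self_le_sqrt (hα1 : α ≤ 1) {x : H} (hx : ‖x‖ = 1) :
    ‖⟪T x, x⟫_ℂ‖ ≤ √(α * ‖⟪T x, x⟫_ℂ‖ ^ 2 + (1 - α) * ‖T x‖ ^ 2) := by
  have hCS : ‖⟪T x, x⟫_ℂ‖ ≤ ‖T x‖ := by
    simpa [hx] using norm_inner_le_norm (𝕜 := ℂ) (T x) x
  refine Real.le_sqrt_of_sq_le ?_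
  nlinarith [pow_le_pow_left₀ (norm_nonneg _) hCS 2]

lemma sqrt_le_sqrt_mul_numRadius (hα0 : 0 ≤ α) (hα1 : α ≤ 1) {x : H} (hx : ‖x‖ = 1) :
    √(α * ‖⟪T x, x⟫_ℂ‖ ^ 2 + (1 - α) * ‖T x‖ ^ 2) ≤ √(4 - 3 * α) * numRadius T := by
  have hw := numRadius_nonneg T
  have hinner := pow_le_pow_left₀ (norm_nonneg _) (norm_inner_apply_self_le_numRadius T hx) 2
  have happly : ‖T x‖ ^ 2 ≤ (2 * numRadius T) ^ 2 := by
    gcongr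
    exact (T.unit_le_opNorm x hx.le).trans (opNorm_le_two_mul_numRadius T)
  rw [← Real.sqrt_sq hw, ← Real.sqrt_mul (by linarith)]
  gcongr
  nlinarith

lemma alphaNorm_le_sqrt_mul_numRadius (hα0 : 0 ≤ α) (hα1 : α ≤ 1) :
    alphaNorm α T ≤ √(4 - 3 * α) * numRadius T :=
  Real.sSup_le (by rintro r ⟨x, hx, rfl⟩; exact sqrt_le_sqrt_mul_numRadius T hα0 hα1 hx)
    (by have := numRadius_nonneg T; positivity)

lemma numRadius_le_alphaNorm (hα0 : 0 ≤ α) (hα1 : α ≤ 1) : numRadius T ≤ alphaNorm α T := by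
  have hbdd : BddAbove {r : ℝ | ∃ x : H, ‖x‖ = 1 ∧
      r = √(α * ‖⟪T x, x⟫_ℂ‖ ^ 2 + (1 - α) * ‖T x‖ ^ 2)} := by
    refine ⟨√(4 - 3 * α) * numRadius T, ?_⟩
    rintro r ⟨x, hx, rfl⟩
    exact sqrt_le_sqrt_mul_numRadius T hα0 hα1 hx
  refine Real.sSup_le ?_ (Real.sSup_nonneg (by rintro r ⟨x, -, rfl⟩; positivity))
  rintro r ⟨x, hx, rfl⟩
  exact (norm_inner_apply_self_le_sqrt T hα1 hx).trans (le_csSup hbdd ⟨x, hx, rfl⟩)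

end AlphaNorm

/-- For `0 < α ≤ 1`, `w(T) ≤ ‖T‖_α ≤ √(4 - 3α) · w(T)`. -/
theorem alphaNorm_numRadius_bounds {H : Type*} [NormedAddCommGroup H] [InnerProductSpace ℂ H]
    (α : ℝ) (hα0 : 0 < α) (hα1 : α ≤ 1) (T : H →L[ℂ] H) :
    numRadius T ≤ alphaNorm α T ∧ alphaNorm α T ≤ Real.sqrt (4 - 3 * α) * numRadius T :=
  ⟨numRadius_le_alphaNorm T hα0.le hα1, alphaNorm_le_sqrt_mul_numRadius T hα0.le hα1⟩
end

section
/- For A, B ∈ B(H), the off-diagonal operator matrices [[0, A],[B, 0]] and [[0, B],[A, 0]] on H ⊕ H have equal α-norms. -/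
open scoped Matrix

variable {H : Type*} [NormedAddCommGroup H] [InnerProductSpace ℂ H]

/-- The canonical inclusion `H × H → H ⊕₂ H`. -/
noncomputable def pr (x y : H) : WithLp 2 (H × H) := (WithLp.equiv 2 (H × H)).symm (x, y)

/-! The swap `(x, y) ↦ (y, x)` is a unitary of `H ⊕ H` conjugating `[[0, A], [B, 0]]` into
`[[0, B], [A, 0]]`, and the `α`-norm is invariant under unitary conjugation, since a unitary
preserves the unit sphere, norms and inner products. -/

theorem alphaNorm_eq_of_semiconj {E F : Type*} [NormedAddCommGroup E]
    [InnerProductSpace ℂ E] [NormedAddCommGroup F] [InnerProductSpace ℂ F] (α : ℝ)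
    (U : E ≃ₗᵢ[ℂ] F) {T : E →L[ℂ] E} {S : F →L[ℂ] F} (h : Function.Semiconj U T S) :
    alphaNorm α T = alphaNorm α S := by
  have hterm : ∀ x, α * ‖(inner ℂ (S (U x)) (U x) : ℂ)‖ ^ 2 + (1 - α) * ‖S (U x)‖ ^ 2 =
      α * ‖(inner ℂ (T x) x : ℂ)‖ ^ 2 + (1 - α) * ‖T x‖ ^ 2 := fun x => by
    rw [← h x, U.inner_map_map, U.norm_map]
  unfold alphaNorm
  congr 1
  ext r
  constructor
  · rintro ⟨x, hx, rfl⟩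
    exact ⟨U x, by rwa [U.norm_map], by rw [hterm]⟩
  · rintro ⟨y, hy, rfl⟩
    refine ⟨U.symm y, by rwa [U.symm.norm_map], ?_⟩
    rw [← hterm, U.apply_symm_apply]

theorem alphaNorm_offdiag_swap_general (α : ℝ) (A B : H →L[ℂ] H)
    (T S : WithLp 2 (H × H) →L[ℂ] WithLp 2 (H × H))
    (hT : ∀ x y : H, T (pr x y) = pr (A y) (B x))
    (hS : ∀ x y : H, S (pr x y) = pr (B y) (A x)) :
    alphaNorm α T = alphaNorm α S :=
  alphaNorm_eq_of_semiconj α (LinearIsometryEquiv.withLpProdComm 2 ℂ H H)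
    fun z => by
      change _ = S (pr z.snd z.fst)
      rw [hS, show T z = pr (A z.snd) (B z.fst) from hT z.fst z.snd]
      rfl

/-- `‖[[0, A],[B, 0]]‖_α = ‖[[0, B],[A, 0]]‖_α`. -/
theorem alphaNorm_offdiag_swap (α : ℝ) (hα0 : 0 ≤ α) (hα1 : α ≤ 1) (A B : H →L[ℂ] H)
    (T S : WithLp 2 (H × H) →L[ℂ] WithLp 2 (H × H))
    (hT : ∀ x y : H, T (pr x y) = pr (A y) (B x))
    (hS : ∀ x y : H, S (pr x y) = pr (B y) (A x)) :
    alphaNorm α T = alphaNorm α S :=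
  alphaNorm_offdiag_swap_general α A B T S hT hS
end

section
/- For A, B ∈ B(H), the operator matrix [[A, B],[B, A]] on H ⊕ H has the same α-norm as the block diagonal operator diag(A−B, A+B). -/
open scoped Matrix

variable {H : Type*} [NormedAddCommGroup H] [InnerProductSpace ℂ H]

/-! The rotation `U (x, y) = ((x - y) / √2, (x + y) / √2)` of `H ⊕₂ H` is unitary by the
parallelogram law, and it intertwines the two operators: `S ∘ U = U ∘ T`. Both quantities in the
`α`-norm are invariant under such a unitary change of variables. -/

@[ext]
theorem WithLp.prod_ext {p : ENNReal} {α β : Type*} [AddCommGroup α] [AddCommGroup β]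
    {x y : WithLp p (α × β)} (h₁ : x.fst = y.fst) (h₂ : x.snd = y.snd) : x = y :=
  WithLp.ofLp_injective p (Prod.ext h₁ h₂)

theorem alphaNorm_eq_of_conj {E F : Type*} [NormedAddCommGroup E] [InnerProductSpace ℂ E]
    [NormedAddCommGroup F] [InnerProductSpace ℂ F] (α : ℝ) (U : E ≃ₗᵢ[ℂ] F)
    {T : E →L[ℂ] E} {S : F →L[ℂ] F} (h : ∀ z, S (U z) = U (T z)) :
    alphaNorm α T = alphaNorm α S := by
  unfold alphaNorm
  congr 1
  ext r
  exact (U.surjective.exists.trans (exists_congr fun z => by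
    rw [h, U.inner_map_map, U.norm_map, U.norm_map])).symm

lemma sqrt_two_inv_smul_smul {𝕜 M : Type*} [RCLike 𝕜] [AddCommMonoid M] [Module 𝕜 M] (x : M) :
    ((√2)⁻¹ : 𝕜) • ((√2)⁻¹ : 𝕜) • x = (2 : 𝕜)⁻¹ • x := by
  rw [smul_smul, ← mul_inv, ← RCLike.ofReal_mul, Real.mul_self_sqrt zero_le_two,
    RCLike.ofReal_ofNat]

section Rotation

variable {𝕜 E : Type*} [RCLike 𝕜] [NormedAddCommGroup E] [InnerProductSpace 𝕜 E]

variable (𝕜 E) in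
noncomputable def prodRotation : WithLp 2 (E × E) ≃ₗᵢ[𝕜] WithLp 2 (E × E) where
  toFun z := WithLp.toLp 2 (((√2)⁻¹ : 𝕜) • (z.fst - z.snd), ((√2)⁻¹ : 𝕜) • (z.fst + z.snd))
  invFun z := WithLp.toLp 2 (((√2)⁻¹ : 𝕜) • (z.fst + z.snd), ((√2)⁻¹ : 𝕜) • (z.snd - z.fst))
  map_add' z w := by
    ext <;> simp only [WithLp.toLp_fst, WithLp.toLp_snd, WithLp.add_fst, WithLp.add_snd] <;> module
  map_smul' c z := by
    ext <;> simp only [WithLp.toLp_fst, WithLp.toLp_snd, WithLp.smul_fst, WithLp.smul_snd,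
      RingHom.id_apply] <;> module
  left_inv z := by
    ext <;> simp only [WithLp.toLp_fst, WithLp.toLp_snd, smul_add, smul_sub,
      sqrt_two_inv_smul_smul] <;> module
  right_inv z := by
    ext <;> simp only [WithLp.toLp_fst, WithLp.toLp_snd, smul_add, smul_sub,
      sqrt_two_inv_smul_smul] <;> module
  norm_map' z := by
    show ‖WithLp.toLp 2 (_, _)‖ = _
    rw [← sq_eq_sq₀ (norm_nonneg _) (norm_nonneg _), WithLp.prod_norm_sq_eq_of_L2,
      WithLp.prod_norm_sq_eq_of_L2]
    simp only [WithLp.toLp_fst, WithLp.toLp_snd, norm_smul, mul_pow]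
    have hc : ‖((√2)⁻¹ : 𝕜)‖ ^ 2 = 2⁻¹ := by simp
    rw [hc]
    linarith [parallelogram_law_with_norm 𝕜 z.fst z.snd]

end Rotation

lemma prodRotation_pr (x y : H) :
    prodRotation ℂ H (pr x y) = pr (((√2)⁻¹ : ℂ) • (x - y)) (((√2)⁻¹ : ℂ) • (x + y)) :=
  rfl

theorem alphaNorm_symmetric_block_general (α : ℝ) (A B : H →L[ℂ] H)
    (T S : WithLp 2 (H × H) →L[ℂ] WithLp 2 (H × H))
    (hT : ∀ x y : H, T (pr x y) = pr (A x + B y) (B x + A y))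
    (hS : ∀ x y : H, S (pr x y) = pr ((A - B) x) ((A + B) y)) :
    alphaNorm α T = alphaNorm α S := by
  refine alphaNorm_eq_of_conj α (prodRotation ℂ H) fun z => ?_
  obtain ⟨x, y, rfl⟩ : ∃ x y, z = pr x y := ⟨z.fst, z.snd, rfl⟩
  rw [prodRotation_pr, hS, hT, prodRotation_pr]
  congr 1 <;> simp only [map_smul, map_sub, map_add, sub_apply, add_apply] <;> module

/-- `‖[[A, B],[B, A]]‖_α = ‖diag(A - B, A + B)‖_α`. -/
theorem alphaNorm_symmetric_block (α : ℝ) (hα0 : 0 ≤ α) (hα1 : α ≤ 1) (A B : H →L[ℂ] H)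
    (T S : WithLp 2 (H × H) →L[ℂ] WithLp 2 (H × H))
    (hT : ∀ x y : H, T (pr x y) = pr (A x + B y) (B x + A y))
    (hS : ∀ x y : H, S (pr x y) = pr ((A - B) x) ((A + B) y)) :
    alphaNorm α T = alphaNorm α S :=
  alphaNorm_symmetric_block_general α A B T S hT hS
end

section
/- For X, Y ∈ B(H) and T = diag(X, Y) on H ⊕ H, ‖T‖_α ≤ √(2)·max{‖X‖_α, ‖Y‖_α}. -/
open scoped Matrix

variable {H : Type*} [NormedAddCommGroup H] [InnerProductSpace ℂ H]

/-! For a unit vector `z = (x, y)` of `H ⊕₂ H` we have `⟨Tz, z⟩ = ⟨Xx, x⟩ + ⟨Yy, y⟩` and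
`‖Tz‖² = ‖Xx‖² + ‖Yy‖²`, so `(a + b)² ≤ 2(a² + b²)` bounds the quantity under the root by
`2(f_X(x) + f_Y(y))`, where `f_X(x) = α|⟨Xx,x⟩|² + (1-α)‖Xx‖²` (`alphaForm α X x`). Since
`f_X(c • u)` is of degree four in `|c|` in its first term and of degree two in its second,
`f_X(x) ≤ ‖x‖² ‖X‖_α²` when `‖x‖ ≤ 1`, and `‖x‖² + ‖y‖² = 1` gives `2 max{‖X‖_α, ‖Y‖_α}²`. -/

section AlphaForm

variable {E F : Type*} [NormedAddCommGroup E] [InnerProductSpace ℂ E]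
  [NormedAddCommGroup F] [InnerProductSpace ℂ F] {α : ℝ}

noncomputable def alphaForm (α : ℝ) (T : E →L[ℂ] E) (x : E) : ℝ :=
  α * ‖(inner ℂ (T x) x : ℂ)‖ ^ 2 + (1 - α) * ‖T x‖ ^ 2

lemma alphaForm_le_opNorm_sq (hα0 : 0 ≤ α) (hα1 : α ≤ 1) (T : E →L[ℂ] E) {x : E}
    (hx : ‖x‖ = 1) : alphaForm α T x ≤ ‖T‖ ^ 2 := by
  have hTx : ‖T x‖ ≤ ‖T‖ := by simpa [hx] using T.le_opNorm x
  have hinner : ‖(inner ℂ (T x) x : ℂ)‖ ≤ ‖T‖ := by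
    simpa [hx] using (norm_inner_le_norm (𝕜 := ℂ) (T x) x).trans (by simpa [hx] using hTx)
  have h1 := pow_le_pow_left₀ (norm_nonneg _) hinner 2
  have h2 := pow_le_pow_left₀ (norm_nonneg _) hTx 2
  unfold alphaForm
  nlinarith

lemma alphaForm_smul (T : E →L[ℂ] E) (c : ℂ) (x : E) :
    alphaForm α T (c • x) =
      α * ‖c‖ ^ 4 * ‖(inner ℂ (T x) x : ℂ)‖ ^ 2 + (1 - α) * ‖c‖ ^ 2 * ‖T x‖ ^ 2 := by
  simp only [alphaForm, map_smul, inner_smul_left, inner_smul_right, norm_smul, norm_mul,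
    RCLike.norm_conj]
  ring

lemma alphaForm_smul_le (hα0 : 0 ≤ α) (T : E →L[ℂ] E) {c : ℂ} (hc : ‖c‖ ≤ 1)
    (x : E) : alphaForm α T (c • x) ≤ ‖c‖ ^ 2 * alphaForm α T x := by
  have hc4 : ‖c‖ ^ 4 ≤ ‖c‖ ^ 2 := pow_le_pow_of_le_one (norm_nonneg c) hc (by norm_num)
  have hinner : α * ‖c‖ ^ 4 * ‖(inner ℂ (T x) x : ℂ)‖ ^ 2 ≤
      α * ‖c‖ ^ 2 * ‖(inner ℂ (T x) x : ℂ)‖ ^ 2 := by gcongr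
  rw [alphaForm_smul, alphaForm]
  linarith

lemma alphaNorm_bddAbove (hα0 : 0 ≤ α) (hα1 : α ≤ 1) (T : E →L[ℂ] E) :
    BddAbove {r : ℝ | ∃ x : E, ‖x‖ = 1 ∧
      r = Real.sqrt (alphaForm α T x)} := by
  refine ⟨‖T‖, ?_⟩
  rintro r ⟨x, hx, rfl⟩
  exact Real.sqrt_le_left (norm_nonneg T) |>.mpr (alphaForm_le_opNorm_sq hα0 hα1 T hx)

lemma alphaNorm_nonneg (T : E →L[ℂ] E) : 0 ≤ alphaNorm α T :=
  Real.sSup_nonneg (by rintro r ⟨x, -, rfl⟩; exact Real.sqrt_nonneg _)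

lemma alphaForm_le_alphaNorm_sq (hα0 : 0 ≤ α) (hα1 : α ≤ 1) (T : E →L[ℂ] E) {x : E}
    (hx : ‖x‖ = 1) : alphaForm α T x ≤ alphaNorm α T ^ 2 :=
  (Real.sqrt_le_left (alphaNorm_nonneg T)).mp
    (le_csSup (alphaNorm_bddAbove hα0 hα1 T) ⟨x, hx, rfl⟩)

lemma alphaForm_le_norm_sq_mul_alphaNorm_sq (hα0 : 0 ≤ α) (hα1 : α ≤ 1) (T : E →L[ℂ] E)
    {x : E} (hx : ‖x‖ ≤ 1) : alphaForm α T x ≤ ‖x‖ ^ 2 * alphaNorm α T ^ 2 := by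
  rcases eq_or_ne x 0 with rfl | hx0
  · simp [alphaForm]
  set u := (‖x‖⁻¹ : ℂ) • x
  have hu : ‖u‖ = 1 := norm_smul_inv_norm hx0
  have hxu : x = (‖x‖ : ℂ) • u := by
    rw [smul_smul, mul_inv_cancel₀ (by exact_mod_cast norm_ne_zero_iff.mpr hx0), one_smul]
  calc alphaForm α T x = alphaForm α T ((‖x‖ : ℂ) • u) := by rw [← hxu]
    _ ≤ ‖x‖ ^ 2 * alphaForm α T u := by
      simpa using alphaForm_smul_le hα0 T (c := (‖x‖ : ℂ)) (by simpa using hx) u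
    _ ≤ ‖x‖ ^ 2 * alphaNorm α T ^ 2 := by
      gcongr
      exact alphaForm_le_alphaNorm_sq hα0 hα1 T hu

lemma alphaForm_diag_le (hα0 : 0 ≤ α) (hα1 : α ≤ 1) (X : E →L[ℂ] E) (Y : F →L[ℂ] F)
    (T : WithLp 2 (E × F) →L[ℂ] WithLp 2 (E × F))
    (hT : ∀ x y, T (WithLp.toLp 2 (x, y)) = WithLp.toLp 2 (X x, Y y)) (z : WithLp 2 (E × F)) :
    alphaForm α T z ≤ 2 * (alphaForm α X z.fst + alphaForm α Y z.snd) := by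
  have hTz : T z = WithLp.toLp 2 (X z.fst, Y z.snd) := hT z.fst z.snd
  have hinner : (inner ℂ (T z) z : ℂ) = inner ℂ (X z.fst) z.fst + inner ℂ (Y z.snd) z.snd := by
    rw [hTz, WithLp.prod_inner_apply]; rfl
  have hnorm : ‖T z‖ ^ 2 = ‖X z.fst‖ ^ 2 + ‖Y z.snd‖ ^ 2 := by
    rw [hTz, WithLp.prod_norm_sq_eq_of_L2]; rfl
  have hsq : ‖(inner ℂ (T z) z : ℂ)‖ ^ 2 ≤
      2 * (‖(inner ℂ (X z.fst) z.fst : ℂ)‖ ^ 2 + ‖(inner ℂ (Y z.snd) z.snd : ℂ)‖ ^ 2) := by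
    rw [hinner]
    exact (pow_le_pow_left₀ (norm_nonneg _) (norm_add_le _ _) 2).trans add_sq_le
  have h1α : 0 ≤ 1 - α := sub_nonneg.mpr hα1
  unfold alphaForm
  rw [hnorm]
  linarith [mul_le_mul_of_nonneg_left hsq hα0,
    mul_nonneg h1α (add_nonneg (sq_nonneg ‖X z.fst‖) (sq_nonneg ‖Y z.snd‖))]

end AlphaForm

/-- `‖diag(X, Y)‖_α ≤ √2 · max{‖X‖_α, ‖Y‖_α}`. -/
theorem alphaNorm_diag_sqrt_two (α : ℝ) (hα0 : 0 ≤ α) (hα1 : α ≤ 1) (X Y : H →L[ℂ] H)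
    (T : WithLp 2 (H × H) →L[ℂ] WithLp 2 (H × H))
    (hT : ∀ x y : H, T (pr x y) = pr (X x) (Y y)) :
    alphaNorm α T ≤ Real.sqrt 2 * max (alphaNorm α X) (alphaNorm α Y) := by
  set M := max (alphaNorm α X) (alphaNorm α Y)
  have hM : 0 ≤ M := le_max_of_le_left (alphaNorm_nonneg X)
  refine Real.sSup_le ?_ (by positivity)
  rintro r ⟨z, hz, rfl⟩
  have hz2 : ‖z.fst‖ ^ 2 + ‖z.snd‖ ^ 2 = 1 := by
    rw [← WithLp.prod_norm_sq_eq_of_L2, hz, one_pow]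
  have hX := alphaForm_le_norm_sq_mul_alphaNorm_sq hα0 hα1 X (x := z.fst) (by nlinarith)
  have hY := alphaForm_le_norm_sq_mul_alphaNorm_sq hα0 hα1 Y (x := z.snd) (by nlinarith)
  have hXM : alphaNorm α X ^ 2 ≤ M ^ 2 := by gcongr; exacts [alphaNorm_nonneg X, le_max_left ..]
  have hYM : alphaNorm α Y ^ 2 ≤ M ^ 2 := by gcongr; exacts [alphaNorm_nonneg Y, le_max_right ..]
  have hform : alphaForm α T z ≤ 2 * M ^ 2 := by
    nlinarith [alphaForm_diag_le hα0 hα1 X Y T hT z, sq_nonneg ‖z.fst‖, sq_nonneg ‖z.snd‖]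
  calc Real.sqrt (alphaForm α T z) ≤ Real.sqrt (2 * M ^ 2) := Real.sqrt_le_sqrt hform
    _ = Real.sqrt 2 * M := by
      rw [Real.sqrt_mul zero_le_two, Real.sqrt_sq hM]
end

section
/- Let T = (T_ij) be an n×n operator matrix with T_ij ∈ B(H), and let f, g be nonnegative continuous functions on [0,∞) with f(t)g(t) = t for all t ≥ 0. Let R = (r_ij) with r_ij = (‖f²(|T_ij|)‖^{1/2}‖g²(|T_ij*|)‖^{1/2} + ‖f²(|T_ji|)‖^{1/2}‖g²(|T_ji*|)‖^{1/2})/2, and S = (‖T_ij‖). Then for α ∈ [0,1], ‖T‖_α ≤ √(‖α|R|² + (1−α)|S|²‖). -/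
open scoped Matrix

/-- The modulus `|A| = (A*A)^{1/2}` of a bounded operator, via the continuous functional
calculus. -/
noncomputable def absOp {H : Type*} [NormedAddCommGroup H] [InnerProductSpace ℂ H]
    [CompleteSpace H] (A : H →L[ℂ] H) : H →L[ℂ] H :=
  cfc Real.sqrt (ContinuousLinearMap.adjoint A * A)

/-! For a unit vector `x` put `u i = ‖x i‖`. Since `‖A‖` lies in the spectra of both `|A|` and
`|A*|` and `f g = id` there, `‖A‖ ≤ ‖f(|A|)‖ ‖g(|A*|)‖`; applied to the blocks this bounds
`|⟨Tx, x⟩|` by `⟨C u, u⟩ = ⟨R u, u⟩ ≤ ‖R u‖`, where `R` is the symmetric part of the matrix `C` of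
these products, and `‖(Tx)_i‖` by `(S u)_i`. Finally
`α ‖R u‖² + (1 - α) ‖S u‖² = ⟨(α R*R + (1 - α) S*S) u, u⟩` is at most the norm of that matrix. -/

section CStar

variable {A : Type*} [CStarAlgebra A]

lemma IsSelfAdjoint.sqrt_norm_sq {b : A} (hb : IsSelfAdjoint b) : √‖b ^ 2‖ = ‖b‖ := by
  simpa using congrArg Real.sqrt (hb.norm_pow_two_pow 1)

variable [PartialOrder A] [StarOrderedRing A]

lemma abs_apply_norm_le_norm_cfc [Nontrivial A] {a : A} (ha : 0 ≤ a) {f : ℝ → ℝ}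
    (hf : ContinuousOn f (spectrum ℝ a)) : |f ‖a‖| ≤ ‖cfc f a‖ :=
  norm_apply_le_norm_cfc f a (CStarAlgebra.norm_mem_spectrum_of_nonneg ha)

lemma norm_le_norm_cfc_abs_mul_norm_cfc_abs_star {f g : ℝ → ℝ}
    (hf : ContinuousOn f (Set.Ici 0)) (hg : ContinuousOn g (Set.Ici 0))
    (hfg : ∀ t ∈ Set.Ici (0 : ℝ), f t * g t = t) (a : A) :
    ‖a‖ ≤ ‖cfc f (CFC.abs a)‖ * ‖cfc g (CFC.abs (star a))‖ := by
  rcases eq_or_ne a 0 with rfl | ha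
  · rw [norm_zero]; positivity
  have : Nontrivial A := ⟨⟨a, 0, ha⟩⟩
  have hspec (b : A) : spectrum ℝ (CFC.abs b) ⊆ Set.Ici 0 :=
    fun _ ht => spectrum_nonneg_of_nonneg (CFC.abs_nonneg b) ht
  have hf' := abs_apply_norm_le_norm_cfc (CFC.abs_nonneg a) (hf.mono (hspec a))
  have hg' := abs_apply_norm_le_norm_cfc (CFC.abs_nonneg (star a)) (hg.mono (hspec (star a)))
  rw [CFC.norm_abs] at hf'
  rw [CFC.norm_abs, norm_star] at hg'
  calc ‖a‖ = |f ‖a‖| * |g ‖a‖| := by rw [← abs_mul, hfg _ (norm_nonneg a), abs_norm]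
    _ ≤ _ := mul_le_mul hf' hg' (abs_nonneg _) (norm_nonneg _)

end CStar

section Operator

variable {H : Type*} [NormedAddCommGroup H] [InnerProductSpace ℂ H] [CompleteSpace H]

lemma absOp_eq_abs (A : H →L[ℂ] H) : absOp A = CFC.abs A := by
  rw [absOp, CFC.abs, CFC.sqrt_eq_real_sqrt _ (star_mul_self_nonneg A), cfcₙ_eq_cfc]
  rfl

lemma norm_le_sqrt_norm_cfc_absOp_sq {f g : ℝ → ℝ}
    (hf : ContinuousOn f (Set.Ici 0)) (hg : ContinuousOn g (Set.Ici 0))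
    (hfg : ∀ t ∈ Set.Ici (0 : ℝ), f t * g t = t) (A : H →L[ℂ] H) :
    ‖A‖ ≤ √‖(cfc f (absOp A)) ^ 2‖ * √‖(cfc g (absOp (ContinuousLinearMap.adjoint A))) ^ 2‖ := by
  rw [(cfc_predicate f (absOp A)).sqrt_norm_sq,
    (cfc_predicate g (absOp (ContinuousLinearMap.adjoint A))).sqrt_norm_sq, absOp_eq_abs,
    absOp_eq_abs, ← ContinuousLinearMap.star_eq_adjoint]
  exact norm_le_norm_cfc_abs_mul_norm_cfc_abs_star hf hg hfg A

end Operator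

lemma alphaNorm_le_sqrt {H : Type*} [NormedAddCommGroup H] [InnerProductSpace ℂ H]
    {α b : ℝ} {T : H →L[ℂ] H}
    (hb : ∀ x : H, ‖x‖ = 1 → α * ‖(inner ℂ (T x) x : ℂ)‖ ^ 2 + (1 - α) * ‖T x‖ ^ 2 ≤ b) :
    alphaNorm α T ≤ √b := by
  refine Real.sSup_le ?_ (Real.sqrt_nonneg b)
  rintro _ ⟨x, hx, rfl⟩
  exact Real.sqrt_le_sqrt (hb x hx)

lemma smul_norm_sq_add_smul_norm_sq_le_norm {E : Type*} [NormedAddCommGroup E]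
    [InnerProductSpace ℂ E] [CompleteSpace E] (P Q : E →L[ℂ] E) (α β : ℝ) {v : E}
    (hv : ‖v‖ = 1) :
    α * ‖P v‖ ^ 2 + β * ‖Q v‖ ^ 2 ≤ ‖(α : ℂ) • (star P * P) + (β : ℂ) • (star Q * Q)‖ := by
  set M := (α : ℂ) • (star P * P) + (β : ℂ) • (star Q * Q)
  have hre : RCLike.re (inner ℂ v (M v) : ℂ) = α * ‖P v‖ ^ 2 + β * ‖Q v‖ ^ 2 := by
    simp only [M, add_apply, smul_apply, mul_apply_eq_comp, inner_add_right, inner_smul_right,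
      ContinuousLinearMap.star_eq_adjoint, ContinuousLinearMap.adjoint_inner_right,
      inner_self_eq_norm_sq_to_K, map_add]
    simp only [RCLike.re_to_complex, Complex.re_ofReal_mul]
    norm_cast
  calc α * ‖P v‖ ^ 2 + β * ‖Q v‖ ^ 2 ≤ ‖v‖ * ‖M v‖ := hre ▸ re_inner_le_norm v (M v)
    _ ≤ ‖v‖ * (‖M‖ * ‖v‖) := by gcongr; exact M.le_opNorm v
    _ = ‖M‖ := by rw [hv, one_mul, mul_one]

section Blocks

variable {ι : Type*} [Fintype ι] {H : Type*} [NormedAddCommGroup H]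

lemma norm_apply_le_mulVec [NormedSpace ℂ H] {Tij : ι → ι → H →L[ℂ] H}
    {T : PiLp 2 (fun _ : ι => H) →L[ℂ] PiLp 2 (fun _ : ι => H)}
    (hT : ∀ x i, T x i = ∑ j, Tij i j (x j)) {c : Matrix ι ι ℝ}
    (hc : ∀ i j, ‖Tij i j‖ ≤ c i j) (x : PiLp 2 (fun _ : ι => H)) (i : ι) :
    ‖T x i‖ ≤ (c *ᵥ fun j => ‖x j‖) i := by
  rw [hT, Matrix.mulVec, dotProduct]
  refine (norm_sum_le _ _).trans (Finset.sum_le_sum fun j _ => ?_)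
  exact (Tij i j).le_of_opNorm_le (hc i j) (x j)

lemma norm_sq_le_sum_mulVec_sq [NormedSpace ℂ H] {Tij : ι → ι → H →L[ℂ] H}
    {T : PiLp 2 (fun _ : ι => H) →L[ℂ] PiLp 2 (fun _ : ι => H)}
    (hT : ∀ x i, T x i = ∑ j, Tij i j (x j)) {c : Matrix ι ι ℝ}
    (hc : ∀ i j, ‖Tij i j‖ ≤ c i j) (x : PiLp 2 (fun _ : ι => H)) :
    ‖T x‖ ^ 2 ≤ ∑ i, (c *ᵥ fun j => ‖x j‖) i ^ 2 := by
  rw [PiLp.norm_sq_eq_of_L2]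
  gcongr with i
  exact norm_apply_le_mulVec hT hc x i

lemma norm_inner_self_le_dotProduct_mulVec [InnerProductSpace ℂ H]
    {Tij : ι → ι → H →L[ℂ] H}
    {T : PiLp 2 (fun _ : ι => H) →L[ℂ] PiLp 2 (fun _ : ι => H)}
    (hT : ∀ x i, T x i = ∑ j, Tij i j (x j)) {c : Matrix ι ι ℝ}
    (hc : ∀ i j, ‖Tij i j‖ ≤ c i j) (x : PiLp 2 (fun _ : ι => H)) :
    ‖(inner ℂ (T x) x : ℂ)‖ ≤ (fun i => ‖x i‖) ⬝ᵥ (c *ᵥ fun j => ‖x j‖) := by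
  rw [PiLp.inner_apply, dotProduct]
  refine (norm_sum_le _ _).trans (Finset.sum_le_sum fun i _ => ?_)
  calc ‖(inner ℂ (T x i) (x i) : ℂ)‖ ≤ ‖T x i‖ * ‖x i‖ := norm_inner_le_norm _ _
    _ ≤ (c *ᵥ fun j => ‖x j‖) i * ‖x i‖ := by gcongr; exact norm_apply_le_mulVec hT hc x i
    _ = ‖x i‖ * (c *ᵥ fun j => ‖x j‖) i := mul_comm _ _

end Blocks

section Matrices

variable {ι : Type*} [Fintype ι]

lemma dotProduct_mulVec_half_add_transpose {K : Type*} [Field K] [NeZero (2 : K)]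
    (c : Matrix ι ι K) (u : ι → K) :
    u ⬝ᵥ ((2 : K)⁻¹ • (c + cᵀ)) *ᵥ u = u ⬝ᵥ c *ᵥ u := by
  have htr : u ⬝ᵥ cᵀ *ᵥ u = u ⬝ᵥ c *ᵥ u := by
    rw [Matrix.dotProduct_mulVec, Matrix.vecMul_transpose, dotProduct_comm]
  rw [Matrix.smul_mulVec, Matrix.add_mulVec, dotProduct_smul, dotProduct_add, htr, smul_eq_mul,
    ← two_mul, inv_mul_cancel_left₀ two_ne_zero]

lemma dotProduct_mulVec_sq_le_sum_sq (c : Matrix ι ι ℝ) {u : ι → ℝ}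
    (hu : ∑ i, u i ^ 2 = 1) : (u ⬝ᵥ c *ᵥ u) ^ 2 ≤ ∑ i, (c *ᵥ u) i ^ 2 := by
  simpa [dotProduct, hu] using Finset.sum_mul_sq_le_sq_mul_sq Finset.univ u (c *ᵥ u)

lemma norm_sq_toLp_ofReal (u : ι → ℝ) :
    ‖(WithLp.toLp 2 fun i => (u i : ℂ) : EuclideanSpace ℂ ι)‖ ^ 2 = ∑ i, u i ^ 2 := by
  simp [EuclideanSpace.norm_sq_eq]

lemma toEuclideanCLM_map_ofReal_toLp [DecidableEq ι] (A : Matrix ι ι ℝ) (u : ι → ℝ) :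
    Matrix.toEuclideanCLM (𝕜 := ℂ) (A.map Complex.ofReal) (WithLp.toLp 2 fun i => (u i : ℂ)) =
      WithLp.toLp 2 fun i => ((A *ᵥ u) i : ℂ) := by
  rw [Matrix.toEuclideanCLM_toLp]
  congr 1
  ext i
  exact (RingHom.map_mulVec Complex.ofRealHom A u i).symm

lemma smul_sum_sq_add_smul_sum_sq_le_norm [DecidableEq ι]
    (A B : Matrix ι ι ℝ) (α β : ℝ) {u : ι → ℝ} (hu : ∑ i, u i ^ 2 = 1) :
    α * ∑ i, (A *ᵥ u) i ^ 2 + β * ∑ i, (B *ᵥ u) i ^ 2 ≤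
      ‖Matrix.toEuclideanCLM (𝕜 := ℂ)
        ((α : ℂ) • ((A.map Complex.ofReal)ᴴ * A.map Complex.ofReal) +
          (β : ℂ) • ((B.map Complex.ofReal)ᴴ * B.map Complex.ofReal))‖ := by
  have hv : ‖(WithLp.toLp 2 fun i => (u i : ℂ) : EuclideanSpace ℂ ι)‖ = 1 := by
    rw [← Real.sqrt_sq (norm_nonneg _), norm_sq_toLp_ofReal, hu, Real.sqrt_one]
  have key := smul_norm_sq_add_smul_norm_sq_le_norm
    (Matrix.toEuclideanCLM (𝕜 := ℂ) (A.map Complex.ofReal))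
    (Matrix.toEuclideanCLM (𝕜 := ℂ) (B.map Complex.ofReal)) α β hv
  rw [toEuclideanCLM_map_ofReal_toLp, toEuclideanCLM_map_ofReal_toLp, norm_sq_toLp_ofReal,
    norm_sq_toLp_ofReal, ← map_star, ← map_star, ← map_mul, ← map_mul, ← map_smul, ← map_smul,
    ← map_add] at key
  simpa only [Matrix.star_eq_conjTranspose] using key

end Matrices

theorem alphaNorm_opMatrix_fg_bound_general {n : ℕ} {H : Type*}
    [NormedAddCommGroup H] [InnerProductSpace ℂ H] [CompleteSpace H]
    (α : ℝ) (hα0 : 0 ≤ α) (hα1 : α ≤ 1)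
    (f g : ℝ → ℝ) (hf : ContinuousOn f (Set.Ici 0)) (hg : ContinuousOn g (Set.Ici 0))
    (hfg : ∀ t ∈ Set.Ici (0 : ℝ), f t * g t = t)
    (Tij : ∀ _ _ : Fin n, H →L[ℂ] H)
    (T : PiLp 2 (fun _ : Fin n => H) →L[ℂ] PiLp 2 (fun _ : Fin n => H))
    (hT : ∀ (x : PiLp 2 (fun _ : Fin n => H)) (i : Fin n), T x i = ∑ j, Tij i j (x j))
    (R S : Matrix (Fin n) (Fin n) ℝ)
    (hR : ∀ i j, R i j =
      (Real.sqrt ‖(cfc f (absOp (Tij i j))) ^ 2‖ *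
          Real.sqrt ‖(cfc g (absOp (ContinuousLinearMap.adjoint (Tij i j)))) ^ 2‖ +
        Real.sqrt ‖(cfc f (absOp (Tij j i))) ^ 2‖ *
          Real.sqrt ‖(cfc g (absOp (ContinuousLinearMap.adjoint (Tij j i)))) ^ 2‖) / 2)
    (hS : ∀ i j, S i j = ‖Tij i j‖) :
    alphaNorm α T ≤ Real.sqrt ‖Matrix.toEuclideanCLM (𝕜 := ℂ)
      ((α : ℂ) • ((R.map Complex.ofReal)ᴴ * R.map Complex.ofReal) +
        ((1 - α : ℝ) : ℂ) • ((S.map Complex.ofReal)ᴴ * S.map Complex.ofReal))‖ := by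
  set C : Matrix (Fin n) (Fin n) ℝ := fun i j =>
    √‖(cfc f (absOp (Tij i j))) ^ 2‖ *
      √‖(cfc g (absOp (ContinuousLinearMap.adjoint (Tij i j)))) ^ 2‖
  have hC : ∀ i j, ‖Tij i j‖ ≤ C i j := fun i j => norm_le_sqrt_norm_cfc_absOp_sq hf hg hfg _
  have hRC : R = (2 : ℝ)⁻¹ • (C + Cᵀ) := by
    ext i j
    rw [Matrix.smul_apply, Matrix.add_apply, Matrix.transpose_apply, smul_eq_mul, inv_mul_eq_div,
      hR]
  refine alphaNorm_le_sqrt fun x hx => ?_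
  set u : Fin n → ℝ := fun i => ‖x i‖
  have hu : ∑ i, u i ^ 2 = 1 := by rw [← PiLp.norm_sq_eq_of_L2, hx, one_pow]
  have hinner : ‖(inner ℂ (T x) x : ℂ)‖ ^ 2 ≤ ∑ i, (R *ᵥ u) i ^ 2 :=
    calc ‖(inner ℂ (T x) x : ℂ)‖ ^ 2 ≤ (u ⬝ᵥ R *ᵥ u) ^ 2 := by
          rw [hRC, dotProduct_mulVec_half_add_transpose]
          gcongr
          exact norm_inner_self_le_dotProduct_mulVec hT hC x
      _ ≤ ∑ i, (R *ᵥ u) i ^ 2 := dotProduct_mulVec_sq_le_sum_sq R hu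
  have hnorm : ‖T x‖ ^ 2 ≤ ∑ i, (S *ᵥ u) i ^ 2 :=
    norm_sq_le_sum_mulVec_sq hT (fun i j => (hS i j).ge) x
  calc α * ‖(inner ℂ (T x) x : ℂ)‖ ^ 2 + (1 - α) * ‖T x‖ ^ 2
      ≤ α * ∑ i, (R *ᵥ u) i ^ 2 + (1 - α) * ∑ i, (S *ᵥ u) i ^ 2 := by
        have : 0 ≤ 1 - α := sub_nonneg.2 hα1
        gcongr
    _ ≤ _ := smul_sum_sq_add_smul_sum_sq_le_norm R S α (1 - α) hu

/-- `‖T‖_α ≤ √(‖α|R|² + (1-α)|S|²‖)` where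
`r_ij = (‖f²(|T_ij|)‖^{1/2}‖g²(|T_ij*|)‖^{1/2} + ‖f²(|T_ji|)‖^{1/2}‖g²(|T_ji*|)‖^{1/2})/2`
and `s_ij = ‖T_ij‖`, for nonnegative continuous `f, g` on `[0,∞)` with `f(t)g(t) = t`. -/
theorem alphaNorm_opMatrix_fg_bound {n : ℕ} {H : Type*}
    [NormedAddCommGroup H] [InnerProductSpace ℂ H] [CompleteSpace H]
    (α : ℝ) (hα0 : 0 ≤ α) (hα1 : α ≤ 1)
    (f g : ℝ → ℝ) (hf : ContinuousOn f (Set.Ici 0)) (hg : ContinuousOn g (Set.Ici 0))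
    (hf0 : ∀ t ∈ Set.Ici (0 : ℝ), 0 ≤ f t) (hg0 : ∀ t ∈ Set.Ici (0 : ℝ), 0 ≤ g t)
    (hfg : ∀ t ∈ Set.Ici (0 : ℝ), f t * g t = t)
    (Tij : ∀ _ _ : Fin n, H →L[ℂ] H)
    (T : PiLp 2 (fun _ : Fin n => H) →L[ℂ] PiLp 2 (fun _ : Fin n => H))
    (hT : ∀ (x : PiLp 2 (fun _ : Fin n => H)) (i : Fin n), T x i = ∑ j, Tij i j (x j))
    (R S : Matrix (Fin n) (Fin n) ℝ)
    (hR : ∀ i j, R i j =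
      (Real.sqrt ‖(cfc f (absOp (Tij i j))) ^ 2‖ *
          Real.sqrt ‖(cfc g (absOp (ContinuousLinearMap.adjoint (Tij i j)))) ^ 2‖ +
        Real.sqrt ‖(cfc f (absOp (Tij j i))) ^ 2‖ *
          Real.sqrt ‖(cfc g (absOp (ContinuousLinearMap.adjoint (Tij j i)))) ^ 2‖) / 2)
    (hS : ∀ i j, S i j = ‖Tij i j‖) :
    alphaNorm α T ≤ Real.sqrt ‖Matrix.toEuclideanCLM (𝕜 := ℂ)
      ((α : ℂ) • ((R.map Complex.ofReal)ᴴ * R.map Complex.ofReal) +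
        ((1 - α : ℝ) : ℂ) • ((S.map Complex.ofReal)ᴴ * S.map Complex.ofReal))‖ :=
  alphaNorm_opMatrix_fg_bound_general α hα0 hα1 f g hf hg hfg Tij T hT R S hR hS
end
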